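/- For every ξ ∈ ℝ and every y ∈ ℝ^{N−1}, the Hessian of F_N^{(ξ)}(y) = (1/4)P₄(y) + ξ·P₃(y) + (3/2)ξ²·P₂(y) + (1/2)Q(y) satisfies Hess F_N^{(ξ)}(y) ≥ μ − 1 > 0. -/

import Mathlib

open Real Finset Matrix

noncomputable section

/-- The normalized discrete Laplacian with periodic boundary conditions. -/
def Kd (μ : ℝ) (N : ℕ) (hN : N ≠ 0) (x : Fin N → ℝ) : Fin N → ℝ :=
  haveI : NeZero N := ⟨hN⟩
  fun k => μ / (4 * Real.sin (π / N) ^ 2) * (2 * x k - x (k + 1) - x (k - 1))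

/-- The localized energy `F_N^{(ξ)}(y) = (1/4)P₄ + ξP₃ + (3/2)ξ²P₂ + (1/2)Q` on the
mean-zero hyperplane, parametrized by an `N×(N−1)` matrix `A` with orthonormal columns. -/
def F (μ : ℝ) (N : ℕ) (hN : N ≠ 0) (A : Matrix (Fin N) (Fin (N - 1)) ℝ) (ξ : ℝ)
    (y : Fin (N - 1) → ℝ) : ℝ :=
  (1 / 4 : ℝ) * ∑ k, A.mulVec y k ^ 4 + ξ * ∑ k, A.mulVec y k ^ 3
    + (3 / 2 : ℝ) * ξ ^ 2 * ∑ k, A.mulVec y k ^ 2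
    + (1 / 2 : ℝ) * ((∑ k, A.mulVec y k * Kd μ N hN (A.mulVec y) k)
        - ∑ k, A.mulVec y k ^ 2)

/-! ### Auxiliary results: discrete Fourier analysis and the sharp discrete Wirtinger
inequality on the cycle. -/

namespace Stmt8Aux

/-- The root-of-unity character `m ↦ exp(2πim/N)`. -/
noncomputable def zet (N : ℕ) (m : ℤ) : ℂ := Complex.exp (2 * Real.pi * Complex.I * m / N)

lemma zet_add (N : ℕ) (m m' : ℤ) : zet N (m + m') = zet N m * zet N m' := by
  rw [zet, zet, zet, ← Complex.exp_add]
  congr 1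
  push_cast
  ring

lemma zet_zero (N : ℕ) : zet N 0 = 1 := by simp [zet]

lemma zet_dvd (N : ℕ) (hN : N ≠ 0) (m : ℤ) (h : (N : ℤ) ∣ m) : zet N m = 1 := by
  obtain ⟨t, rfl⟩ := h
  rw [zet]
  have hNc : (N : ℂ) ≠ 0 := Nat.cast_ne_zero.mpr hN
  have : 2 * (Real.pi:ℂ) * Complex.I * ((N:ℂ) * (t:ℂ)) / (N:ℂ) = t * (2 * Real.pi * Complex.I) := by
    field_simp
  rw [show ((((N:ℤ)*t : ℤ)):ℂ) = (N:ℂ)*(t:ℂ) by push_cast; ring, this,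
    Complex.exp_int_mul_two_pi_mul_I]

lemma zet_congr (N : ℕ) (hN : N ≠ 0) {m m' : ℤ} (h : (N : ℤ) ∣ m - m') : zet N m = zet N m' := by
  have : zet N m = zet N (m' + (m - m')) := by ring_nf
  rw [this, zet_add, zet_dvd N hN _ h, mul_one]

lemma zet_conj (N : ℕ) (m : ℤ) : (starRingEnd ℂ) (zet N m) = zet N (-m) := by
  rw [zet, zet, ← Complex.exp_conj]
  congr 1
  simp only [map_div₀, _root_.map_mul, Complex.conj_I, Complex.conj_ofReal, map_ofNat, map_natCast,
    map_intCast]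
  push_cast
  ring

lemma zet_pow (N : ℕ) (m : ℤ) (j : ℕ) : zet N (m * j) = zet N m ^ j := by
  induction j with
  | zero => simp [zet_zero]
  | succ n ih => rw [pow_succ, ← ih, ← zet_add]; congr 1; push_cast; ring

lemma zet_ne_one (N : ℕ) (hN : N ≠ 0) {m : ℤ} (h : ¬ (N:ℤ) ∣ m) : zet N m ≠ 1 := by
  intro hc
  rw [zet, Complex.exp_eq_one_iff] at hc
  obtain ⟨n, hn⟩ := hc
  apply h
  refine Dvd.intro_left n ?_
  have hNc : (N : ℂ) ≠ 0 := Nat.cast_ne_zero.mpr hN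
  have hπ : (Real.pi : ℂ) ≠ 0 := by
    simpa using Real.pi_ne_zero
  have : (m : ℂ) = (n : ℂ) * (N : ℂ) := by
    field_simp at hn
    have h2 : (2 : ℂ) * (π : ℂ) * Complex.I ≠ 0 := by
      simp [Complex.I_ne_zero, hπ, Real.pi_ne_zero]
    have := mul_left_cancel₀ h2 (by linear_combination (2 * (π:ℂ) * Complex.I) * hn :
      (2 * (π:ℂ) * Complex.I) * (m : ℂ) = (2 * (π:ℂ) * Complex.I) * ((n:ℂ) * (N:ℂ)))
    exact this
  exact_mod_cast this.symm

lemma zet_orth (N : ℕ) (hN : N ≠ 0) (m : ℤ) :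
    ∑ j : Fin N, zet N (m * j.val) = if (N:ℤ) ∣ m then (N:ℂ) else 0 := by
  split_ifs with h
  · have : ∀ j : Fin N, zet N (m * j.val) = 1 := fun j => zet_dvd N hN _ (h.mul_right _)
    simp [this]
  · have hne : zet N m ≠ 1 := zet_ne_one N hN h
    have : ∀ j : Fin N, zet N (m * j.val) = zet N m ^ j.val := fun j => zet_pow N m j.val
    simp only [this]
    rw [Fin.sum_univ_eq_sum_range (fun i => zet N m ^ i), geom_sum_eq hne]
    have : zet N m ^ N = 1 := by rw [← zet_pow, zet_dvd N hN _ ⟨m, by ring⟩]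
    rw [this]
    simp

lemma fin_dvd_iff (N : ℕ) (k l : Fin N) : ((N:ℤ) ∣ ((k.val : ℤ) - l.val)) ↔ k = l := by
  constructor
  · intro h
    by_contra hne
    have hd0 : (k.val : ℤ) - l.val ≠ 0 := by
      intro h0
      exact hne (Fin.ext (by omega))
    have h1 : (N : ℤ) ≤ |(k.val : ℤ) - l.val| :=
      Int.le_of_dvd (abs_pos.mpr hd0) ((dvd_abs _ _).mpr h)
    have h2 : |(k.val : ℤ) - l.val| < N := by
      have := k.isLt; have := l.isLt
      rw [abs_lt]; omega
    omega
  · rintro rfl; simp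

lemma parseval (N : ℕ) (hN : N ≠ 0) (g : Fin N → ℝ) :
    ∑ j : Fin N, Complex.normSq (∑ k : Fin N, (g k : ℂ) * zet N (j.val * k.val))
      = N * ∑ k, (g k)^2 := by
  have key : (∑ j : Fin N, ((Complex.normSq (∑ k : Fin N, (g k : ℂ) * zet N (j.val * k.val)) : ℝ) : ℂ))
      = (N : ℂ) * ∑ k, ((g k : ℂ))^2 := by
    have hconj : ∀ j : Fin N,
        ((∑ k : Fin N, (g k : ℂ) * zet N (j.val * k.val)) * (starRingEnd ℂ) (∑ k : Fin N, (g k : ℂ) * zet N (j.val * k.val)))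
        = ∑ k : Fin N, ∑ l : Fin N, ((g k : ℂ) * (g l : ℂ)) * zet N (((k.val:ℤ) - l.val) * j.val) := by
      intro j
      rw [_root_.map_sum, Finset.sum_mul_sum]
      refine Finset.sum_congr rfl fun k _ => Finset.sum_congr rfl fun l _ => ?_
      rw [_root_.map_mul, Complex.conj_ofReal, zet_conj, mul_mul_mul_comm, ← zet_add]
      congr 1
      ring
    calc ∑ j : Fin N, ((Complex.normSq (∑ k : Fin N, (g k : ℂ) * zet N (j.val * k.val)) : ℝ) : ℂ)
        = ∑ j : Fin N, ∑ k : Fin N, ∑ l : Fin N, ((g k : ℂ) * (g l : ℂ)) * zet N (((k.val:ℤ) - l.val) * j.val) := by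
          refine Finset.sum_congr rfl fun j _ => ?_
          rw [← Complex.mul_conj, hconj j]
      _ = ∑ k : Fin N, ∑ l : Fin N, ((g k : ℂ) * (g l : ℂ)) * ∑ j : Fin N, zet N (((k.val:ℤ) - l.val) * j.val) := by
          rw [Finset.sum_comm]
          refine Finset.sum_congr rfl fun k _ => ?_
          rw [Finset.sum_comm]
          refine Finset.sum_congr rfl fun l _ => ?_
          rw [Finset.mul_sum]
      _ = ∑ k : Fin N, ∑ l : Fin N, (if k = l then ((g k : ℂ) * (g l : ℂ)) * N else 0) := by
          refine Finset.sum_congr rfl fun k _ => Finset.sum_congr rfl fun l _ => ?_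
          rw [zet_orth N hN]
          by_cases h : k = l
          · rw [if_pos ((fin_dvd_iff N k l).mpr h), if_pos h]
          · rw [if_neg (fun hc => h ((fin_dvd_iff N k l).mp hc)), if_neg h, mul_zero]
      _ = ∑ k : Fin N, ((g k : ℂ) * (g k : ℂ)) * N := by
          refine Finset.sum_congr rfl fun k _ => ?_
          simp
      _ = (N : ℂ) * ∑ k, ((g k : ℂ))^2 := by
          rw [Finset.mul_sum]
          refine Finset.sum_congr rfl fun k _ => by ring
  have := key
  rw [← Complex.ofReal_sum] at this
  have h2 : ((∑ j : Fin N, Complex.normSq (∑ k : Fin N, (g k : ℂ) * zet N (j.val * k.val)) : ℝ) : ℂ)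
      = ((N * ∑ k, (g k)^2 : ℝ) : ℂ) := by
    rw [this]; push_cast; ring
  exact_mod_cast h2

lemma dvd_sub_one_val (n : ℕ) (m : Fin (n+1)) :
    ((n+1:ℕ):ℤ) ∣ (((m - 1 : Fin (n+1)).val : ℤ) + 1 - m.val) := by
  rw [Fin.coe_sub_one]
  by_cases h : m = 0
  · rw [if_pos h, h]
    simp
  · rw [if_neg h]
    have : 1 ≤ m.val := by
      rcases Nat.eq_zero_or_pos m.val with h0 | h1
      · exact absurd (Fin.ext h0) h
      · exact h1
    have : ((m.val - 1 : ℕ) : ℤ) = (m.val : ℤ) - 1 := by omega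
    rw [this]
    simp

lemma shift_coef (n : ℕ) (f : Fin (n+1) → ℝ) (j : Fin (n+1)) :
    ∑ k : Fin (n+1), ((f k - f (k+1) : ℝ) : ℂ) * zet (n+1) (j.val * k.val)
      = (1 - zet (n+1) (-(j.val:ℤ))) * ∑ k : Fin (n+1), (f k : ℂ) * zet (n+1) (j.val * k.val) := by
  have hN : (n+1) ≠ 0 := Nat.succ_ne_zero n
  have hsplit : ∑ k : Fin (n+1), ((f k - f (k+1) : ℝ) : ℂ) * zet (n+1) (j.val * k.val)
      = (∑ k : Fin (n+1), (f k:ℂ) * zet (n+1) (j.val * k.val))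
        - ∑ k : Fin (n+1), (f (k+1):ℂ) * zet (n+1) (j.val * k.val) := by
    rw [← Finset.sum_sub_distrib]
    refine Finset.sum_congr rfl fun k _ => ?_
    push_cast
    ring
  have hre : ∑ k : Fin (n+1), (f (k+1):ℂ) * zet (n+1) (j.val * k.val)
      = ∑ m : Fin (n+1), (f m : ℂ) * zet (n+1) ((j.val:ℤ) * ((m - 1 : Fin (n+1)).val)) := by
    refine Fintype.sum_equiv (Equiv.addRight (1 : Fin (n+1)))
      (fun k => (f (k+1):ℂ) * zet (n+1) (j.val * k.val))
      (fun m => (f m : ℂ) * zet (n+1) ((j.val:ℤ) * ((m - 1 : Fin (n+1)).val))) fun k => ?_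
    simp only [Equiv.coe_addRight]
    rw [add_sub_cancel_right]
  have hζ : ∀ m : Fin (n+1), zet (n+1) ((j.val:ℤ) * ((m - 1 : Fin (n+1)).val))
      = zet (n+1) (-(j.val:ℤ)) * zet (n+1) ((j.val:ℤ) * m.val) := by
    intro m
    rw [← zet_add]
    refine zet_congr (n+1) hN ?_
    have h := dvd_sub_one_val n m
    have : (j.val:ℤ) * ((m - 1 : Fin (n+1)).val) - (-(j.val:ℤ) + (j.val:ℤ) * m.val)
        = (j.val:ℤ) * (((m - 1 : Fin (n+1)).val : ℤ) + 1 - m.val) := by ring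
    rw [this]
    exact Dvd.dvd.mul_left h _
  have hre2 : ∑ m : Fin (n+1), (f m : ℂ) * zet (n+1) ((j.val:ℤ) * ((m - 1 : Fin (n+1)).val))
      = zet (n+1) (-(j.val:ℤ)) * ∑ m : Fin (n+1), (f m : ℂ) * zet (n+1) ((j.val:ℤ) * m.val) := by
    rw [Finset.mul_sum]
    refine Finset.sum_congr rfl fun m _ => ?_
    rw [hζ m]
    ring
  rw [hsplit, hre, hre2]
  ring

lemma normSq_one_sub_zet (N : ℕ) (hN : N ≠ 0) (j : ℕ) :
    Complex.normSq (1 - zet N (-(j:ℤ))) = 4 * Real.sin (π * j / N)^2 := by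
  have hz : zet N (-(j:ℤ)) = Complex.exp (((-(2 * π * j / N) : ℝ) : ℂ) * Complex.I) := by
    rw [zet]
    congr 1
    push_cast
    ring
  have hre : (1 - zet N (-(j:ℤ))).re = 1 - Real.cos (-(2 * π * j / N)) := by
    rw [hz]
    simp only [Complex.sub_re, Complex.one_re, Complex.exp_ofReal_mul_I_re]
  have him : (1 - zet N (-(j:ℤ))).im = - Real.sin (-(2 * π * j / N)) := by
    rw [hz]
    simp only [Complex.sub_im, Complex.one_im, Complex.exp_ofReal_mul_I_im, zero_sub]
  rw [Complex.normSq_apply, hre, him]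
  rw [Real.cos_neg, Real.sin_neg]
  have h2 : 2 * π * j / N = 2 * (π * j / N) := by ring
  rw [h2]
  have hs := Real.sin_sq_add_cos_sq (π * j / N)
  have hc := Real.cos_sq (π * j / N)
  have hs2 := Real.sin_sq_add_cos_sq (2 * (π * j / N))
  nlinarith [hs, hc, hs2]

lemma sin_bound_aux (N j : ℕ) (hN : 2 ≤ N) (h1 : 1 ≤ j) (h2 : 2 * j ≤ N) :
    Real.sin (π / N) ≤ Real.sin (π * j / N) := by
  have hπ := Real.pi_pos
  have hN0 : (0:ℝ) < N := by positivity
  have hm1 : π / N ∈ Set.Icc (-(π/2)) (π/2) := by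
    constructor
    · have : (0:ℝ) < π / N := by positivity
      linarith
    · rw [div_le_div_iff₀ hN0 (by norm_num)]
      have : (2:ℝ) ≤ N := by exact_mod_cast hN
      nlinarith
  have hm2 : π * j / N ∈ Set.Icc (-(π/2)) (π/2) := by
    constructor
    · have : (0:ℝ) ≤ π * j / N := by positivity
      linarith
    · rw [div_le_div_iff₀ hN0 (by norm_num)]
      have : (2:ℝ) * j ≤ N := by exact_mod_cast h2
      nlinarith
  have hle : π / N ≤ π * j / N := by
    have hj : (1:ℝ) ≤ j := by exact_mod_cast h1
    rw [div_le_div_iff₀ hN0 hN0]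
    nlinarith [mul_pos hπ hN0]
  exact Real.strictMonoOn_sin.monotoneOn hm1 hm2 hle

lemma sin_bound (N j : ℕ) (hN : 2 ≤ N) (h1 : 1 ≤ j) (h2 : j ≤ N - 1) :
    Real.sin (π / N) ≤ Real.sin (π * j / N) := by
  by_cases hc : 2 * j ≤ N
  · exact sin_bound_aux N j hN h1 hc
  · have hjN : j ≤ N := by omega
    have heq : Real.sin (π * j / N) = Real.sin (π * (N - j : ℕ) / N) := by
      rw [show (π * ((N - j : ℕ):ℝ) / N) = π - π * j / N by
        rw [Nat.cast_sub hjN]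
        have : (N:ℝ) ≠ 0 := by positivity
        field_simp]
      rw [Real.sin_pi_sub]
    rw [heq]
    exact sin_bound_aux N (N - j) hN (by omega) (by omega)

lemma wirtinger (n : ℕ) (hn : 1 ≤ n) (f : Fin (n+1) → ℝ) (hf : ∑ k, f k = 0) :
    4 * Real.sin (π / ((n+1:ℕ):ℝ))^2 * ∑ k, f k ^ 2
      ≤ ∑ k : Fin (n+1), (f k - f (k+1))^2 := by
  have hN0 : (n+1 : ℕ) ≠ 0 := Nat.succ_ne_zero n
  set c : Fin (n+1) → ℂ := fun j => ∑ k, (f k : ℂ) * zet (n+1) (j.val * k.val) with hc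
  have hc0 : c 0 = 0 := by
    rw [hc]
    simp only [Fin.val_zero, Nat.cast_zero, zero_mul, zet_zero, mul_one]
    rw [← Complex.ofReal_sum]
    rw [hf]
    simp
  have hparf : ∑ j, Complex.normSq (c j) = (n+1 : ℕ) * ∑ k, f k ^ 2 := parseval (n+1) hN0 f
  have hparg : ∑ j : Fin (n+1), Complex.normSq (1 - zet (n+1) (-(j.val:ℤ))) * Complex.normSq (c j)
      = (n+1 : ℕ) * ∑ k : Fin (n+1), (f k - f (k+1))^2 := by
    have := parseval (n+1) hN0 (fun k => f k - f (k+1))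
    rw [← this]
    refine Finset.sum_congr rfl fun j _ => ?_
    rw [show (∑ k : Fin (n+1), ((f k - f (k+1) : ℝ) : ℂ) * zet (n+1) (j.val * k.val))
        = (1 - zet (n+1) (-(j.val:ℤ))) * c j from shift_coef n f j]
    rw [Complex.normSq_mul]
  have hpt : ∀ j : Fin (n+1),
      4 * Real.sin (π / ((n+1:ℕ):ℝ))^2 * Complex.normSq (c j)
        ≤ Complex.normSq (1 - zet (n+1) (-(j.val:ℤ))) * Complex.normSq (c j) := by
    intro j
    by_cases hj : j = 0
    · rw [hj, hc0]
      simp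
    · have hj1 : 1 ≤ j.val := by
        rcases Nat.eq_zero_or_pos j.val with h0 | h1
        · exact absurd (Fin.ext h0) hj
        · exact h1
      have hj2 : j.val ≤ (n+1) - 1 := by
        have := j.isLt
        omega
      have hb := sin_bound (n+1) j.val (by omega) hj1 hj2
      rw [normSq_one_sub_zet (n+1) hN0 j.val]
      have hs0 : 0 ≤ Real.sin (π / ((n+1:ℕ):ℝ)) := by
        apply Real.sin_nonneg_of_nonneg_of_le_pi
        · positivity
        · have h1N : (1:ℝ) ≤ ((n+1:ℕ):ℝ) := by exact_mod_cast Nat.one_le_iff_ne_zero.mpr hN0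
          calc π / ((n+1:ℕ):ℝ) ≤ π / 1 := by
                apply div_le_div_of_nonneg_left Real.pi_pos.le (by norm_num) h1N
            _ = π := by norm_num
      have : Real.sin (π / ((n+1:ℕ):ℝ))^2 ≤ Real.sin (π * j.val / ((n+1:ℕ):ℝ))^2 := by
        apply sq_le_sq' <;> nlinarith
      nlinarith [Complex.normSq_nonneg (c j)]
  have hsum : 4 * Real.sin (π / ((n+1:ℕ):ℝ))^2 * ∑ j, Complex.normSq (c j)
      ≤ ∑ j : Fin (n+1), Complex.normSq (1 - zet (n+1) (-(j.val:ℤ))) * Complex.normSq (c j) := by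
    rw [Finset.mul_sum]
    exact Finset.sum_le_sum fun j _ => hpt j
  rw [hparf] at hsum
  rw [hparg] at hsum
  have hNpos : (0:ℝ) < ((n+1:ℕ):ℝ) := by positivity
  have := (mul_le_mul_iff_right₀ hNpos).mp (by linarith : ((n+1:ℕ):ℝ) * (4 * Real.sin (π / ((n+1:ℕ):ℝ))^2 * ∑ k, f k ^ 2) ≤ ((n+1:ℕ):ℝ) * ∑ k : Fin (n+1), (f k - f (k+1))^2)
  linarith

lemma wirtinger' (N : ℕ) (hN : 2 ≤ N) (f : Fin N → ℝ) (hf : ∑ k, f k = 0) :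
    haveI : NeZero N := ⟨by omega⟩
    4 * Real.sin (π / (N:ℝ))^2 * ∑ k, f k ^ 2 ≤ ∑ k : Fin N, (f k - f (k+1))^2 := by
  obtain ⟨n, rfl⟩ : ∃ n, N = n + 1 := ⟨N - 1, by omega⟩
  exact wirtinger n (by omega) f hf

/-! ### The derivative computations. -/

/-- The linear functional `z ↦ (Az)ₖ`. -/
def avec (N : ℕ) (A : Matrix (Fin N) (Fin (N - 1)) ℝ) (k : Fin N) : (Fin (N - 1) → ℝ) →L[ℝ] ℝ :=
  (ContinuousLinearMap.proj k).comp (LinearMap.toContinuousLinearMap A.mulVecLin)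

lemma avec_apply (N : ℕ) (A : Matrix (Fin N) (Fin (N - 1)) ℝ) (k : Fin N) (z : Fin (N-1) → ℝ) :
    avec N A k z = A.mulVec z k := rfl

/-- The first directional derivative of `F` in direction `v`, as a function of the base point. -/
def G (μ : ℝ) (N : ℕ) (hN : N ≠ 0) (A : Matrix (Fin N) (Fin (N - 1)) ℝ) (ξ : ℝ)
    (v : Fin (N - 1) → ℝ) (z : Fin (N - 1) → ℝ) : ℝ :=
  haveI : NeZero N := ⟨hN⟩
  ∑ k, (A.mulVec z k ^ 3 + 3 * ξ * A.mulVec z k ^ 2 + 3 * ξ ^ 2 * A.mulVec z k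
      - A.mulVec z k) * A.mulVec v k
    + (1 / 2 : ℝ) * ∑ k,
      (A.mulVec v k * (μ / (4 * Real.sin (π / N) ^ 2) *
          (2 * A.mulVec z k - A.mulVec z (k + 1) - A.mulVec z (k - 1)))
        + A.mulVec z k * (μ / (4 * Real.sin (π / N) ^ 2) *
          (2 * A.mulVec v k - A.mulVec v (k + 1) - A.mulVec v (k - 1))))

lemma key1 (μ : ℝ) (N : ℕ) (hN : N ≠ 0) (A : Matrix (Fin N) (Fin (N - 1)) ℝ) (ξ : ℝ)
    (v : Fin (N - 1) → ℝ) (z : Fin (N - 1) → ℝ) :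
    fderiv ℝ (F μ N hN A ξ) z v = G μ N hN A ξ v z := by
  haveI : NeZero N := ⟨hN⟩
  set c := μ / (4 * Real.sin (π / N) ^ 2) with hc
  have hav : ∀ k (x : Fin (N-1) → ℝ), HasFDerivAt (fun z => A.mulVec z k) (avec N A k) x :=
    fun k x => (avec N A k).hasFDerivAt
  have h4 : ∀ k : Fin N, HasFDerivAt (fun z => A.mulVec z k ^ 4)
      (((4:ℕ) * A.mulVec z k ^ 3) • avec N A k) z := fun k =>
    by have h := (hasDerivAt_pow 4 (A.mulVec z k)).comp_hasFDerivAt z (hav k z); exact h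
  have h3 : ∀ k : Fin N, HasFDerivAt (fun z => A.mulVec z k ^ 3)
      (((3:ℕ) * A.mulVec z k ^ 2) • avec N A k) z := fun k =>
    by have h := (hasDerivAt_pow 3 (A.mulVec z k)).comp_hasFDerivAt z (hav k z); exact h
  have h2 : ∀ k : Fin N, HasFDerivAt (fun z => A.mulVec z k ^ 2)
      (((2:ℕ) * A.mulVec z k ^ 1) • avec N A k) z := fun k =>
    by have h := (hasDerivAt_pow 2 (A.mulVec z k)).comp_hasFDerivAt z (hav k z); exact h
  have hlin : ∀ k : Fin N, HasFDerivAt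
      (fun z => c * (2 * A.mulVec z k - A.mulVec z (k+1) - A.mulVec z (k-1)))
      (c • ((2:ℝ) • avec N A k - avec N A (k+1) - avec N A (k-1))) z := fun k =>
    ((((hav k z).const_mul 2).sub (hav (k+1) z)).sub (hav (k-1) z)).const_mul c
  have hprod : ∀ k : Fin N, HasFDerivAt
      (fun z => A.mulVec z k * (c * (2 * A.mulVec z k - A.mulVec z (k+1) - A.mulVec z (k-1))))
      (A.mulVec z k • (c • ((2:ℝ) • avec N A k - avec N A (k+1) - avec N A (k-1)))
        + (c * (2 * A.mulVec z k - A.mulVec z (k+1) - A.mulVec z (k-1))) • avec N A k) z :=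
    fun k => (hav k z).mul (hlin k)
  have hF : HasFDerivAt (F μ N hN A ξ)
      ((1/4 : ℝ) • ∑ k, (((4:ℕ) * A.mulVec z k ^ 3) • avec N A k)
        + ξ • ∑ k, (((3:ℕ) * A.mulVec z k ^ 2) • avec N A k)
        + ((3/2 : ℝ) * ξ^2) • ∑ k, (((2:ℕ) * A.mulVec z k ^ 1) • avec N A k)
        + (1/2 : ℝ) • ((∑ k, (A.mulVec z k • (c • ((2:ℝ) • avec N A k - avec N A (k+1) - avec N A (k-1)))
            + (c * (2 * A.mulVec z k - A.mulVec z (k+1) - A.mulVec z (k-1))) • avec N A k))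
          - ∑ k, (((2:ℕ) * A.mulVec z k ^ 1) • avec N A k))) z := by
    exact ((((HasFDerivAt.fun_sum (fun k _ => h4 k)).const_mul (1/4)).add
      ((HasFDerivAt.fun_sum (fun k _ => h3 k)).const_mul ξ)).add
      ((HasFDerivAt.fun_sum (fun k _ => h2 k)).const_mul ((3/2) * ξ^2))).add
      (((HasFDerivAt.fun_sum (fun k _ => hprod k)).sub
        (HasFDerivAt.fun_sum (fun k _ => h2 k))).const_mul (1/2))
  rw [hF.fderiv]
  simp only [ContinuousLinearMap.add_apply, ContinuousLinearMap.smul_apply,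
    ContinuousLinearMap.sub_apply, ContinuousLinearMap.sum_apply, avec_apply, smul_eq_mul,
    G, Nat.cast_ofNat, pow_one]
  simp only [Finset.mul_sum, ← Finset.sum_add_distrib, ← Finset.sum_sub_distrib]
  refine Finset.sum_congr rfl fun k _ => ?_
  ring

lemma key2 (μ : ℝ) (N : ℕ) (hN : N ≠ 0) (A : Matrix (Fin N) (Fin (N - 1)) ℝ) (ξ : ℝ)
    (v : Fin (N - 1) → ℝ) (y : Fin (N - 1) → ℝ) :
    haveI : NeZero N := ⟨hN⟩
    fderiv ℝ (G μ N hN A ξ v) y v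
      = ∑ k, (3 * (A.mulVec y k + ξ) ^ 2 - 1) * A.mulVec v k ^ 2
        + ∑ k, A.mulVec v k * (μ / (4 * Real.sin (π / N) ^ 2) *
            (2 * A.mulVec v k - A.mulVec v (k + 1) - A.mulVec v (k - 1))) := by
  haveI : NeZero N := ⟨hN⟩
  set c := μ / (4 * Real.sin (π / N) ^ 2) with hc
  have hav : ∀ k (x : Fin (N-1) → ℝ), HasFDerivAt (fun z => A.mulVec z k) (avec N A k) x :=
    fun k x => (avec N A k).hasFDerivAt
  have h3 : ∀ k : Fin N, HasFDerivAt (fun z => A.mulVec z k ^ 3)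
      (((3:ℕ) * A.mulVec y k ^ 2) • avec N A k) y := fun k =>
    by have h := (hasDerivAt_pow 3 (A.mulVec y k)).comp_hasFDerivAt y (hav k y); exact h
  have h2 : ∀ k : Fin N, HasFDerivAt (fun z => A.mulVec z k ^ 2)
      (((2:ℕ) * A.mulVec y k ^ 1) • avec N A k) y := fun k =>
    by have h := (hasDerivAt_pow 2 (A.mulVec y k)).comp_hasFDerivAt y (hav k y); exact h
  have hterm1 : ∀ k : Fin N, HasFDerivAt
      (fun z => (A.mulVec z k ^ 3 + 3 * ξ * A.mulVec z k ^ 2 + 3 * ξ ^ 2 * A.mulVec z k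
        - A.mulVec z k) * A.mulVec v k)
      ((A.mulVec v k) • ((((3:ℕ) * A.mulVec y k ^ 2) • avec N A k
        + (3 * ξ) • (((2:ℕ) * A.mulVec y k ^ 1) • avec N A k)
        + (3 * ξ ^ 2) • avec N A k) - avec N A k)) y := fun k =>
    ((((h3 k).add ((h2 k).const_mul (3 * ξ))).add ((hav k y).const_mul (3 * ξ^2))).sub
      (hav k y)).mul_const (A.mulVec v k)
  have hterm2 : ∀ k : Fin N, HasFDerivAt
      (fun z => A.mulVec v k * (c * (2 * A.mulVec z k - A.mulVec z (k+1) - A.mulVec z (k-1)))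
        + A.mulVec z k * (c * (2 * A.mulVec v k - A.mulVec v (k+1) - A.mulVec v (k-1))))
      ((A.mulVec v k) • (c • ((2:ℝ) • avec N A k - avec N A (k+1) - avec N A (k-1)))
        + (c * (2 * A.mulVec v k - A.mulVec v (k+1) - A.mulVec v (k-1))) • avec N A k) y :=
    fun k =>
    (((((hav k y).const_mul 2).sub (hav (k+1) y)).sub (hav (k-1) y)).const_mul c |>.const_mul
      (A.mulVec v k)).add ((hav k y).mul_const (c * (2 * A.mulVec v k - A.mulVec v (k+1) - A.mulVec v (k-1))))
  have hG : HasFDerivAt (G μ N hN A ξ v)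
      ((∑ k, (A.mulVec v k) • ((((3:ℕ) * A.mulVec y k ^ 2) • avec N A k
          + (3 * ξ) • (((2:ℕ) * A.mulVec y k ^ 1) • avec N A k)
          + (3 * ξ ^ 2) • avec N A k) - avec N A k))
        + (1/2 : ℝ) • ∑ k, ((A.mulVec v k) • (c • ((2:ℝ) • avec N A k - avec N A (k+1) - avec N A (k-1)))
          + (c * (2 * A.mulVec v k - A.mulVec v (k+1) - A.mulVec v (k-1))) • avec N A k)) y := by
    exact (HasFDerivAt.fun_sum (fun k _ => hterm1 k)).add
      ((HasFDerivAt.fun_sum (fun k _ => hterm2 k)).const_mul (1/2))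
  rw [hG.fderiv]
  simp only [ContinuousLinearMap.add_apply, ContinuousLinearMap.smul_apply,
    ContinuousLinearMap.sub_apply, ContinuousLinearMap.sum_apply, avec_apply, smul_eq_mul,
    Nat.cast_ofNat, pow_one]
  simp only [Finset.mul_sum, ← Finset.sum_add_distrib, ← Finset.sum_sub_distrib]
  refine Finset.sum_congr rfl fun k _ => ?_
  ring

end Stmt8Aux

/-- Uniform convexity of `F_N^{(ξ)}`: its Hessian is bounded below by `μ − 1 > 0`. -/
theorem stmt_8 (μ : ℝ) (hμ : 1 < μ) (N : ℕ) (hN : 2 ≤ N)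
    (A : Matrix (Fin N) (Fin (N - 1)) ℝ)
    (hA1 : Aᵀ * A = 1)
    (hA2 : ∀ y : Fin (N - 1) → ℝ, ∑ k, A.mulVec y k = 0)
    (ξ : ℝ) (y v : Fin (N - 1) → ℝ) :
    fderiv ℝ (fun z => fderiv ℝ (F μ N (by omega) A ξ) z v) y v
      ≥ (μ - 1) * ∑ i, v i ^ 2 ∧ (0 : ℝ) < μ - 1 := by
  have hN0 : N ≠ 0 := by omega
  haveI : NeZero N := ⟨hN0⟩
  refine ⟨?_, by linarith⟩
  show fderiv ℝ (fun z => fderiv ℝ (F μ N hN0 A ξ) z v) y v ≥ (μ - 1) * ∑ i, v i ^ 2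
  have e1 : (fun z => fderiv ℝ (F μ N hN0 A ξ) z v) = Stmt8Aux.G μ N hN0 A ξ v :=
    funext fun z => Stmt8Aux.key1 μ N hN0 A ξ v z
  rw [e1, Stmt8Aux.key2 μ N hN0 A ξ v y]
  set w := A.mulVec v with hwdef
  set c := μ / (4 * Real.sin (π / (N:ℝ)) ^ 2) with hc
  -- norm preservation
  have hnorm : ∑ k, w k ^ 2 = ∑ i, v i ^ 2 := by
    have h := congrArg (fun M : Matrix (Fin (N-1)) (Fin (N-1)) ℝ => v ⬝ᵥ M.mulVec v) hA1
    rw [← Matrix.mulVec_mulVec, Matrix.dotProduct_mulVec, Matrix.vecMul_transpose,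
      Matrix.one_mulVec] at h
    have hL : w ⬝ᵥ w = ∑ k, w k ^ 2 := by
      simp [dotProduct, pow_two]
    have hR : v ⬝ᵥ v = ∑ i, v i ^ 2 := by
      simp [dotProduct, pow_two]
    rw [hL, hR] at h
    exact h
  -- mean zero and Wirtinger
  have hmean : ∑ k, w k = 0 := hA2 v
  have hwir : 4 * Real.sin (π / (N:ℝ))^2 * ∑ k, w k ^ 2 ≤ ∑ k : Fin N, (w k - w (k+1))^2 :=
    Stmt8Aux.wirtinger' N hN w hmean
  -- reindexing identities
  have e1' : ∑ k : Fin N, w (k+1)^2 = ∑ k, w k^2 :=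
    Fintype.sum_equiv (Equiv.addRight (1:Fin N)) (fun k => w (k+1)^2) (fun m => w m^2)
      (fun k => rfl)
  have e2' : ∑ k : Fin N, w (k+1) * w k = ∑ k, w k * w (k-1) :=
    Fintype.sum_equiv (Equiv.addRight (1:Fin N)) (fun k => w (k+1) * w k)
      (fun m => w m * w (m-1)) (fun k => by
        show w (k+1) * w k = w (k+1) * w ((k+1) - 1)
        rw [add_sub_cancel_right])
  have e3' : ∑ k : Fin N, w k * w (k-1) = ∑ k, w k * w (k+1) := by
    rw [← e2']
    exact Finset.sum_congr rfl fun k _ => mul_comm _ _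
  -- summation by parts
  have henergy : ∑ k : Fin N, w k * (c * (2 * w k - w (k+1) - w (k-1)))
      = c * ∑ k : Fin N, (w k - w (k+1))^2 := by
    calc ∑ k : Fin N, w k * (c * (2 * w k - w (k+1) - w (k-1)))
        = ∑ k : Fin N, (c*2*(w k^2) - c*(w k * w (k+1)) - c*(w k * w (k-1))) :=
          Finset.sum_congr rfl fun k _ => by ring
      _ = c*2*(∑ k, w k^2) - c*(∑ k, w k * w (k+1)) - c*(∑ k, w k * w (k-1)) := by
          rw [Finset.sum_sub_distrib, Finset.sum_sub_distrib, ← Finset.mul_sum,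
            ← Finset.mul_sum, ← Finset.mul_sum]
      _ = c * ∑ k : Fin N, (w k - w (k+1))^2 := by
          have hx : ∑ k : Fin N, (w k - w (k+1))^2
              = ∑ k : Fin N, (w k^2 - 2*(w k * w (k+1)) + w (k+1)^2) :=
            Finset.sum_congr rfl fun k _ => by ring
          rw [hx, Finset.sum_add_distrib, Finset.sum_sub_distrib, e1', ← Finset.mul_sum, e3']
          ring
  -- positivity facts
  have hsin : 0 < Real.sin (π / (N:ℝ)) := by
    apply Real.sin_pos_of_pos_of_lt_pi
    · have : (0:ℝ) < N := by positivity
      positivity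
    · apply div_lt_self Real.pi_pos
      have : (2:ℝ) ≤ (N:ℝ) := by exact_mod_cast hN
      linarith
  have hc0 : 0 < c := by
    rw [hc]
    apply div_pos (by linarith) (by positivity)
  -- first term bounded below
  have hterm1 : ∑ k : Fin N, (-1) * w k ^ 2
      ≤ ∑ k : Fin N, (3 * (A.mulVec y k + ξ) ^ 2 - 1) * w k ^ 2 :=
    Finset.sum_le_sum fun k _ => by nlinarith [sq_nonneg (A.mulVec y k + ξ), sq_nonneg (w k)]
  have hterm1' : ∑ k : Fin N, (-1) * w k ^ 2 = -∑ k : Fin N, w k ^ 2 := by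
    simp [neg_one_mul]
  -- second term bounded below
  have h2nd : μ * ∑ k, w k ^ 2 ≤ ∑ k : Fin N, w k * (c * (2 * w k - w (k+1) - w (k-1))) := by
    rw [henergy]
    have h1 : c * (4 * Real.sin (π / (N:ℝ))^2 * ∑ k, w k ^ 2)
        ≤ c * ∑ k : Fin N, (w k - w (k+1))^2 :=
      mul_le_mul_of_nonneg_left hwir hc0.le
    have h2 : c * (4 * Real.sin (π / (N:ℝ))^2 * ∑ k, w k ^ 2) = μ * ∑ k, w k ^ 2 := by
      rw [hc]
      have hne : Real.sin (π / (N:ℝ)) ≠ 0 := ne_of_gt hsin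
      field_simp
    linarith
  have hsplit : (μ - 1) * ∑ k, w k ^ 2 = μ * ∑ k, w k ^ 2 - ∑ k, w k ^ 2 := by ring
  rw [ge_iff_le, ← hnorm]
  linarith [hterm1, hterm1', h2nd, hsplit]
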